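/- Let G be a graph with distinct vertices u, v, and suppose G′ is obtained from G by a uv-0-extension (adding a new vertex z with two edges za, zb where {a,b} ≠ {u,v}). If G is uv-sparse, then G′ is uv-sparse. -/
import Mathlib

open scoped Classical
set_option linter.unusedSectionVars false
set_option linter.unusedVariables false
set_option maxHeartbeats 1000000

/-- Number of edges of `G` induced by the vertex set `U`. -/
noncomputable def iG {V : Type*} [Fintype V] (G : SimpleGraph V) (U : Finset V) : ℕ :=
  (G.edgeFinset.filter (fun e => ∀ x ∈ e, x ∈ U)).card

/-- The value `val(U) = 2|U| - t_U`. -/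
noncomputable def valU {V : Type*} [DecidableEq V] (u v : V) (U : Finset V) : ℤ :=
  2 * U.card - (if U = {u, v} then 4 else if U.card = 2 ∨ U.card = 3 then 3 else 2)

/-- A family of vertex sets is `uv`-compatible if each member contains `u` and `v`
and has at least three vertices. -/
def UVCompatible {V : Type*} (u v : V) (𝒳 : Finset (Finset V)) : Prop :=
  𝒳.Nonempty ∧ ∀ A ∈ 𝒳, u ∈ A ∧ v ∈ A ∧ 3 ≤ A.card

/-- The value of a `uv`-compatible family. -/
noncomputable def valFam {V : Type*} [DecidableEq V] (u v : V) (𝒳 : Finset (Finset V)) : ℤ :=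
  (∑ A ∈ 𝒳, valU u v A) - 2 * ((𝒳.card : ℤ) - 1)

/-- The number of edges of `G` covered by a family of vertex sets. -/
noncomputable def iFam {V : Type*} [Fintype V] (G : SimpleGraph V) (𝒳 : Finset (Finset V)) : ℕ :=
  (𝒳.biUnion (fun A => G.edgeFinset.filter (fun e => ∀ x ∈ e, x ∈ A))).card

/-- `G` is `uv`-sparse. -/
noncomputable def UVSparse {V : Type*} [Fintype V] [DecidableEq V]
    (G : SimpleGraph V) (u v : V) : Prop :=
  (∀ U : Finset V, 2 ≤ U.card → (iG G U : ℤ) ≤ valU u v U) ∧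
  (∀ 𝒳 : Finset (Finset V), UVCompatible u v 𝒳 → (iFam G 𝒳 : ℤ) ≤ valFam u v 𝒳)

/-- `G` is `(2,2)`-sparse. -/
def Sparse22 {V : Type*} [Fintype V] (G : SimpleGraph V) : Prop :=
  ∀ U : Finset V, 2 ≤ U.card → (iG G U : ℤ) ≤ 2 * U.card - 2

section Aux

variable {V : Type*} [Fintype V] [DecidableEq V]

/-- The finset of edges of `G` contained in `U`. -/
noncomputable def covE (G : SimpleGraph V) (U : Finset V) : Finset (Sym2 V) :=
  G.edgeFinset.filter (fun e => ∀ x ∈ e, x ∈ U)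

lemma mem_covE {G : SimpleGraph V} {U : Finset V} {e : Sym2 V} :
    e ∈ covE G U ↔ e ∈ G.edgeSet ∧ ∀ x ∈ e, x ∈ U := by
  unfold covE
  rw [Finset.mem_filter, SimpleGraph.mem_edgeFinset]

lemma iG_eq (G : SimpleGraph V) (U : Finset V) : iG G U = (covE G U).card := by
  unfold iG covE
  congr 1
  ext e
  simp [SimpleGraph.mem_edgeFinset]

lemma iFam_eq (G : SimpleGraph V) (X : Finset (Finset V)) :
    iFam G X = (X.biUnion (covE G)).card := by
  unfold iFam covE
  congr 1
  ext e
  simp [SimpleGraph.mem_edgeFinset]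

lemma sum_image_le'' {α β : Type*} [DecidableEq β] (s : Finset α) (f : α → β) (g : β → ℤ)
    (hg : ∀ i ∈ s, 0 ≤ g (f i)) : ∑ j ∈ s.image f, g j ≤ ∑ i ∈ s, g (f i) := by
  classical
  induction s using Finset.induction_on with
  | empty => simp
  | @insert a s ha ih =>
    rw [Finset.image_insert, Finset.sum_insert ha]
    have h1 := ih (fun i hi => hg i (Finset.mem_insert_of_mem hi))
    by_cases hfa : f a ∈ s.image f
    · rw [Finset.insert_eq_self.2 hfa]
      have h2 := hg a (Finset.mem_insert_self a s)
      linarith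
    · rw [Finset.sum_insert hfa]
      linarith

lemma z_notMem_edge {G : SimpleGraph V} {z : V} (hz : ∀ x, ¬ G.Adj z x) {e : Sym2 V}
    (he : e ∈ G.edgeSet) : z ∉ e := by
  induction e with
  | _ p q =>
    have hadj : G.Adj p q := by simpa using he
    intro hmem
    rcases Sym2.mem_iff.1 hmem with rfl | rfl
    · exact hz q hadj
    · exact hz p hadj.symm

lemma covE_erase {G : SimpleGraph V} {z : V} (hz : ∀ x, ¬ G.Adj z x) (A : Finset V) :
    covE G A = covE G (A.erase z) := by
  ext e
  simp only [mem_covE]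
  constructor
  · rintro ⟨hm, hcov⟩
    refine ⟨hm, fun x hx => Finset.mem_erase.2 ⟨?_, hcov x hx⟩⟩
    rintro rfl
    exact z_notMem_edge hz hm hx
  · rintro ⟨hm, hcov⟩
    exact ⟨hm, fun x hx => (Finset.mem_erase.1 (hcov x hx)).2⟩

lemma covE_small {G : SimpleGraph V} {W : Finset V} (hW : W.card ≤ 1) : covE G W = ∅ := by
  rw [Finset.eq_empty_iff_forall_notMem]
  intro e he
  simp only [mem_covE] at he
  obtain ⟨hm, hcov⟩ := he
  induction e with
  | _ p q =>
    have hadj : G.Adj p q := by simpa using hm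
    have hp : p ∈ W := hcov p (by simp)
    have hq : q ∈ W := hcov q (by simp)
    have hsub : ({p, q} : Finset V) ⊆ W := by
      intro x hx
      rcases Finset.mem_insert.1 hx with rfl | hx
      · exact hp
      · exact (Finset.mem_singleton.1 hx) ▸ hq
    have := Finset.card_le_card hsub
    rw [Finset.card_pair hadj.ne] at this
    omega

lemma covE_pair_empty {G : SimpleGraph V} {u v : V} (huv_adj : ¬ G.Adj u v) :
    covE G {u, v} = ∅ := by
  rw [Finset.eq_empty_iff_forall_notMem]
  intro e he
  simp only [mem_covE] at he
  obtain ⟨hm, hcov⟩ := he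
  induction e with
  | _ p q =>
    have hadj : G.Adj p q := by simpa using hm
    have hp : p = u ∨ p = v := by simpa using hcov p (by simp)
    have hq : q = u ∨ q = v := by simpa using hcov q (by simp)
    rcases hp with rfl | rfl <;> rcases hq with rfl | rfl
    · exact hadj.ne rfl
    · exact huv_adj hadj
    · exact huv_adj hadj.symm
    · exact hadj.ne rfl

lemma edge_char {G : SimpleGraph V} {z a b : V} (hza : z ≠ a) (hzb : z ≠ b) (e : Sym2 V) :
    e ∈ (G ⊔ SimpleGraph.fromEdgeSet {s(z, a), s(z, b)}).edgeSet ↔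
      e ∈ G.edgeSet ∨ e = s(z, a) ∨ e = s(z, b) := by
  simp only [SimpleGraph.edgeSet_sup,
    SimpleGraph.edgeSet_fromEdgeSet, Set.mem_union, Set.mem_diff, Set.mem_insert_iff,
    Set.mem_singleton_iff, Set.mem_setOf_eq]
  constructor
  · rintro (h | ⟨h, -⟩)
    · exact Or.inl h
    · exact Or.inr h
  · rintro (h | h)
    · exact Or.inl h
    · refine Or.inr ⟨h, ?_⟩
      rcases h with rfl | rfl <;> simp [Sym2.isDiag_iff_proj_eq, hza, hzb]

section Val

variable (u v : V)

lemma valU_le (U : Finset V) : valU u v U ≤ 2 * U.card - 2 := by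
  unfold valU
  split_ifs <;> omega

lemma valU_pair (huv : u ≠ v) : valU u v ({u, v} : Finset V) = 0 := by
  have h2 : ({u, v} : Finset V).card = 2 := Finset.card_pair huv
  simp [valU, h2]

lemma valU_card2 {U : Finset V} (h : U.card = 2) (hne' : U ≠ {u, v}) : valU u v U = 1 := by
  simp [valU, h, hne']

lemma card_pair_le (u v : V) : ({u, v} : Finset V).card ≤ 2 := by
  rcases Finset.card_pair_eq_one_or_two (a := u) (b := v) with h | h <;> omega

lemma valU_card3 (huv : u ≠ v) {U : Finset V} (h : U.card = 3) : valU u v U = 3 := by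
  have hne' : U ≠ {u, v} := by
    intro he
    have := card_pair_le u v
    rw [← he, h] at this
    omega
  simp [valU, h, hne']

lemma valU_card4 {U : Finset V} (h : 4 ≤ U.card) : valU u v U = 2 * U.card - 2 := by
  have hne' : U ≠ {u, v} := by
    intro he
    have := card_pair_le u v
    rw [← he] at this
    omega
  unfold valU
  rw [if_neg hne', if_neg (by omega)]

lemma valU_ge3 (huv : u ≠ v) {U : Finset V} (h : 3 ≤ U.card) : 3 ≤ valU u v U := by
  rcases Nat.lt_or_ge U.card 4 with h4 | h4
  · rw [valU_card3 u v huv (by omega)]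
  · rw [valU_card4 u v h4]; omega

lemma valFam_eq (X : Finset (Finset V)) :
    valFam u v X = (∑ A ∈ X, (valU u v A - 2)) + 2 := by
  unfold valFam
  rw [Finset.sum_sub_distrib, Finset.sum_const]
  push_cast [nsmul_eq_mul]
  ring

variable (z : V)

lemma slack_ge_two (huv : u ≠ v) {A : Finset V} (h4 : 4 ≤ A.card) (hzA : z ∈ A) :
    2 ≤ (valU u v A - 2) - max (valU u v (A.erase z) - 2) 0 := by
  have hc : (A.erase z).card + 1 = A.card := Finset.card_erase_add_one hzA
  rcases Nat.lt_or_ge A.card 5 with h5 | h5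
  · have h1 : valU u v A = 2 * A.card - 2 := valU_card4 u v h4
    have h2 : valU u v (A.erase z) = 3 := valU_card3 u v huv (by omega)
    rw [h1, h2]
    have hmax : max ((3 : ℤ) - 2) 0 = 1 := by norm_num
    rw [hmax]
    omega
  · have h1 : valU u v A = 2 * A.card - 2 := valU_card4 u v h4
    have h2 : valU u v (A.erase z) = 2 * (A.erase z).card - 2 := valU_card4 u v (by omega)
    rw [h1, h2]
    rw [max_eq_left (by
      have : (4 : ℕ) ≤ (A.erase z).card := by omega
      have : (4 : ℤ) ≤ ((A.erase z).card : ℤ) := by exact_mod_cast this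
      linarith)]
    omega

lemma slack_ge_one (huv : u ≠ v) {A : Finset V} (h3 : 3 ≤ A.card) (hzA : z ∈ A) :
    1 ≤ (valU u v A - 2) - max (valU u v (A.erase z) - 2) 0 := by
  rcases Nat.lt_or_ge A.card 4 with h4 | h4
  · have hA3 : A.card = 3 := by omega
    have hc : (A.erase z).card + 1 = A.card := Finset.card_erase_add_one hzA
    have h1 : valU u v A = 3 := valU_card3 u v huv hA3
    have h2 := valU_le u v (A.erase z)
    have hc2 : ((A.erase z).card : ℤ) = 2 := by exact_mod_cast (by omega : (A.erase z).card = 2)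
    rw [hc2] at h2
    rw [h1, max_eq_right (by linarith)]
    omega
  · linarith [slack_ge_two u v z huv h4 hzA]

lemma slack_nonneg (huv : u ≠ v) {A : Finset V} (h3 : 3 ≤ A.card) :
    0 ≤ (valU u v A - 2) - max (valU u v (A.erase z) - 2) 0 := by
  by_cases hzA : z ∈ A
  · linarith [slack_ge_one u v z huv h3 hzA]
  · rw [Finset.erase_eq_of_notMem hzA]
    have h := valU_ge3 u v huv h3
    rw [max_eq_left (by linarith)]
    linarith

end Val

end Aux

/-- A `uv`-0-extension (adding a new vertex `z` together with edges `za, zb` where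
`{a,b} ≠ {u,v}`) preserves `uv`-sparsity. -/
theorem uvSparse_of_uv_zero_extension {V : Type*} [Fintype V] [DecidableEq V]
    (G : SimpleGraph V) (u v z a b : V) (huv : u ≠ v) (hab : a ≠ b)
    (hz_new : ∀ x : V, ¬ G.Adj z x)
    (hzu : z ≠ u) (hzv : z ≠ v) (hza : z ≠ a) (hzb : z ≠ b)
    (hne : ({a, b} : Set V) ≠ {u, v})
    (hG : UVSparse G u v) :
    UVSparse (G ⊔ SimpleGraph.fromEdgeSet {s(z, a), s(z, b)}) u v := by
  obtain ⟨hG1, hG2⟩ := hG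
  have huv_adj : ¬ G.Adj u v := by
    intro hadj
    have h1 := hG1 {u, v} (by rw [Finset.card_pair huv])
    rw [valU_pair u v huv] at h1
    have hmem : s(u, v) ∈ covE G {u, v} := mem_covE.2
      ⟨(SimpleGraph.mem_edgeSet G).2 hadj,
      by intro x hx; rcases Sym2.mem_iff.1 hx with rfl | rfl <;> simp⟩
    have h2 : 0 < (covE G {u, v}).card := Finset.card_pos.2 ⟨_, hmem⟩
    rw [iG_eq] at h1
    omega
  have habuv : ¬((a = u ∨ a = v) ∧ (b = u ∨ b = v)) := by
    rintro ⟨(rfl | rfl), (rfl | rfl)⟩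
    · exact hab rfl
    · exact hne rfl
    · exact hne (Set.pair_comm a b)
    · exact hab rfl
  constructor
  · -- single sets
    intro U hU
    by_cases hzU : z ∈ U
    · -- z ∈ U
      have hgen : ∀ e ∈ covE (G ⊔ SimpleGraph.fromEdgeSet {s(z, a), s(z, b)}) U,
          e ∈ covE G (U.erase z) ∨ (e = s(z, a) ∧ a ∈ U) ∨ (e = s(z, b) ∧ b ∈ U) := by
        intro e he
        obtain ⟨hm, hcov⟩ := mem_covE.1 he
        rcases (edge_char hza hzb e).1 hm with h | rfl | rfl
        · left
          rw [← covE_erase hz_new]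
          exact mem_covE.2 ⟨h, hcov⟩
        · exact Or.inr (Or.inl ⟨rfl, hcov a (by simp)⟩)
        · exact Or.inr (Or.inr ⟨rfl, hcov b (by simp)⟩)
      obtain ⟨N, hsubN, hN2, hN1⟩ : ∃ N : Finset (Sym2 V),
          covE (G ⊔ SimpleGraph.fromEdgeSet {s(z, a), s(z, b)}) U ⊆ covE G (U.erase z) ∪ N ∧
          N.card ≤ 2 ∧ (¬(a ∈ U ∧ b ∈ U) → N.card ≤ 1) := by
        by_cases ha' : a ∈ U <;> by_cases hb' : b ∈ U
        · refine ⟨{s(z, a), s(z, b)}, ?_, ?_, fun h => absurd ⟨ha', hb'⟩ h⟩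
          · intro e he
            rcases hgen e he with h | ⟨rfl, _⟩ | ⟨rfl, _⟩
            · exact Finset.mem_union_left _ h
            · exact Finset.mem_union_right _ (by simp)
            · exact Finset.mem_union_right _ (by simp)
          · exact (Finset.card_insert_le _ _).trans (by simp)
        · refine ⟨{s(z, a)}, ?_, by simp, fun _ => by simp⟩
          intro e he
          rcases hgen e he with h | ⟨rfl, _⟩ | ⟨rfl, hbU⟩
          · exact Finset.mem_union_left _ h
          · exact Finset.mem_union_right _ (by simp)
          · exact absurd hbU hb'
        · refine ⟨{s(z, b)}, ?_, by simp, fun _ => by simp⟩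
          intro e he
          rcases hgen e he with h | ⟨rfl, haU⟩ | ⟨rfl, _⟩
          · exact Finset.mem_union_left _ h
          · exact absurd haU ha'
          · exact Finset.mem_union_right _ (by simp)
        · refine ⟨∅, ?_, by simp, fun _ => by simp⟩
          intro e he
          rcases hgen e he with h | ⟨rfl, haU⟩ | ⟨rfl, hbU⟩
          · exact Finset.mem_union_left _ h
          · exact absurd haU ha'
          · exact absurd hbU hb'
      have hcardN : (covE (G ⊔ SimpleGraph.fromEdgeSet {s(z, a), s(z, b)}) U).card ≤
          (covE G (U.erase z)).card + N.card :=
        (Finset.card_le_card hsubN).trans (Finset.card_union_le _ _)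
      have hUe : (U.erase z).card + 1 = U.card := Finset.card_erase_add_one hzU
      rw [iG_eq]
      rcases Nat.lt_or_ge U.card 4 with h4 | h4
      · rcases (by omega : U.card = 2 ∨ U.card = 3) with h2 | h3
        · -- |U| = 2
          have hUuv : U ≠ {u, v} := by
            rintro rfl
            rcases (by simpa using hzU : z = u ∨ z = v) with h | h
            · exact hzu h
            · exact hzv h
          rw [valU_card2 u v h2 hUuv]
          have hcov0 : covE G (U.erase z) = ∅ := covE_small (by omega)
          have hab' : ¬(a ∈ U ∧ b ∈ U) := by
            rintro ⟨ha', hb'⟩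
            have haz : a ∈ U.erase z := Finset.mem_erase.2 ⟨fun h => hza h.symm, ha'⟩
            have hbz : b ∈ U.erase z := Finset.mem_erase.2 ⟨fun h => hzb h.symm, hb'⟩
            have hsub2 : ({a, b} : Finset V) ⊆ U.erase z := by
              intro x hx
              rcases Finset.mem_insert.1 hx with rfl | hx
              · exact haz
              · exact (Finset.mem_singleton.1 hx) ▸ hbz
            have := Finset.card_le_card hsub2
            rw [Finset.card_pair hab] at this
            omega
          have hN := hN1 hab'
          rw [hcov0, Finset.card_empty] at hcardN
          omega
        · -- |U| = 3
          rw [valU_card3 u v huv h3]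
          by_cases herase : U.erase z = ({u, v} : Finset V)
          · have hcov0 : (covE G (U.erase z)).card = 0 := by
              rw [herase, covE_pair_empty huv_adj, Finset.card_empty]
            have hab' : ¬(a ∈ U ∧ b ∈ U) := by
              rintro ⟨ha', hb'⟩
              apply habuv
              constructor
              · have h' : a ∈ U.erase z := Finset.mem_erase.2 ⟨fun h => hza h.symm, ha'⟩
                rw [herase] at h'
                simpa using h'
              · have h' : b ∈ U.erase z := Finset.mem_erase.2 ⟨fun h => hzb h.symm, hb'⟩
                rw [herase] at h'
                simpa using h'
            have hN := hN1 hab'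
            omega
          · have h1 := hG1 (U.erase z) (by omega)
            rw [valU_card2 u v (by omega) herase, iG_eq] at h1
            omega
      · -- |U| ≥ 4
        rw [valU_card4 u v h4]
        have h1 := hG1 (U.erase z) (by omega)
        have h2 := valU_le u v (U.erase z)
        rw [iG_eq] at h1
        have h3 := h1.trans h2
        omega
    · -- z ∉ U
      have hsub : covE (G ⊔ SimpleGraph.fromEdgeSet {s(z, a), s(z, b)}) U = covE G U := by
        ext e
        simp only [mem_covE]
        constructor
        · rintro ⟨hm, hcov⟩
          rcases (edge_char hza hzb e).1 hm with h | rfl | rfl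
          · exact ⟨h, hcov⟩
          · exact absurd (hcov z (by simp)) hzU
          · exact absurd (hcov z (by simp)) hzU
        · rintro ⟨hm, hcov⟩
          exact ⟨(edge_char hza hzb e).2 (Or.inl hm), hcov⟩
      rw [iG_eq, hsub, ← iG_eq]
      exact hG1 U hU
  · -- families
    intro X hX
    obtain ⟨hXne, hXmem⟩ := hX
    set Y := (X.image fun A => A.erase z).erase ({u, v} : Finset V) with hYdef
    have hYmem : ∀ A ∈ X, A.erase z ≠ ({u, v} : Finset V) → A.erase z ∈ Y := by
      intro A hA h
      rw [hYdef]
      exact Finset.mem_erase.2 ⟨h, Finset.mem_image_of_mem _ hA⟩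
    have hmemG : ∀ e ∈ X.biUnion (covE (G ⊔ SimpleGraph.fromEdgeSet {s(z, a), s(z, b)})),
        e ∈ Y.biUnion (covE G) ∨
        (e = s(z, a) ∧ ∃ A ∈ X, z ∈ A ∧ a ∈ A) ∨
        (e = s(z, b) ∧ ∃ A ∈ X, z ∈ A ∧ b ∈ A) := by
      intro e he
      obtain ⟨A, hA, heA⟩ := Finset.mem_biUnion.1 he
      obtain ⟨hm, hcov⟩ := mem_covE.1 heA
      rcases (edge_char hza hzb e).1 hm with h | rfl | rfl
      · left
        have heA' : e ∈ covE G (A.erase z) := by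
          rw [← covE_erase hz_new]
          exact mem_covE.2 ⟨h, hcov⟩
        by_cases hcase : A.erase z = ({u, v} : Finset V)
        · rw [hcase, covE_pair_empty huv_adj] at heA'
          exact absurd heA' (Finset.notMem_empty _)
        · exact Finset.mem_biUnion.2 ⟨A.erase z, hYmem A hA hcase, heA'⟩
      · exact Or.inr (Or.inl ⟨rfl, A, hA, hcov z (by simp), hcov a (by simp)⟩)
      · exact Or.inr (Or.inr ⟨rfl, A, hA, hcov z (by simp), hcov b (by simp)⟩)
    have hA0card : ({z, u, v} : Finset V).card = 3 := by
      rw [Finset.card_insert_of_notMem (by simp [hzu, hzv]), Finset.card_pair huv]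
    by_cases hYe : Y = ∅
    · -- X = {{z, u, v}}
      rw [hYe] at hmemG
      have hXeq : X = {({z, u, v} : Finset V)} := by
        rw [Finset.eq_singleton_iff_nonempty_unique_mem]
        refine ⟨hXne, fun A hA => ?_⟩
        have himg : A.erase z = ({u, v} : Finset V) := by
          by_contra h
          have h' := hYmem A hA h
          rw [hYe] at h'
          simp at h'
        have hzA : z ∈ A := by
          by_contra hz'
          rw [Finset.erase_eq_of_notMem hz'] at himg
          have h3 := (hXmem A hA).2.2
          rw [himg, Finset.card_pair huv] at h3
          omega
        rw [← Finset.insert_erase hzA, himg]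
      have hval3 : valFam u v X = 3 := by
        rw [hXeq, valFam_eq, Finset.sum_singleton, valU_card3 u v huv hA0card]
        norm_num
      have hb_in : ∀ A ∈ X, ∀ x ∈ A, x = z ∨ x = u ∨ x = v := by
        intro A hA x hx
        rw [hXeq] at hA
        rw [Finset.mem_singleton.1 hA] at hx
        simpa using hx
      rw [hval3, iFam_eq]
      by_cases hau : a = u ∨ a = v
      · have hbuv : ¬(b = u ∨ b = v) := fun h => habuv ⟨hau, h⟩
        have hsub : X.biUnion (covE (G ⊔ SimpleGraph.fromEdgeSet {s(z, a), s(z, b)})) ⊆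
            {s(z, a)} := by
          intro e he
          rcases hmemG e he with h | ⟨rfl, _⟩ | ⟨rfl, A, hA, hzA, hbA⟩
          · simp at h
          · simp
          · exfalso
            rcases hb_in A hA b hbA with h | h | h
            · exact hzb h.symm
            · exact hbuv (Or.inl h)
            · exact hbuv (Or.inr h)
        have hle := Finset.card_le_card hsub
        simp only [Finset.card_singleton] at hle
        omega
      · by_cases hbu : b = u ∨ b = v
        · have hsub : X.biUnion (covE (G ⊔ SimpleGraph.fromEdgeSet {s(z, a), s(z, b)})) ⊆
              {s(z, b)} := by
            intro e he
            rcases hmemG e he with h | ⟨rfl, A, hA, hzA, haA⟩ | ⟨rfl, _⟩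
            · simp at h
            · exfalso
              rcases hb_in A hA a haA with h | h | h
              · exact hza h.symm
              · exact hau (Or.inl h)
              · exact hau (Or.inr h)
            · simp
          have hle := Finset.card_le_card hsub
          simp only [Finset.card_singleton] at hle
          omega
        · have hsub : X.biUnion (covE (G ⊔ SimpleGraph.fromEdgeSet {s(z, a), s(z, b)})) ⊆
              (∅ : Finset (Sym2 V)) := by
            intro e he
            rcases hmemG e he with h | ⟨rfl, A, hA, hzA, haA⟩ | ⟨rfl, A, hA, hzA, hbA⟩
            · simp at h
            · exfalso
              rcases hb_in A hA a haA with h | h | h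
              · exact hza h.symm
              · exact hau (Or.inl h)
              · exact hau (Or.inr h)
            · exfalso
              rcases hb_in A hA b hbA with h | h | h
              · exact hzb h.symm
              · exact hbu (Or.inl h)
              · exact hbu (Or.inr h)
          have hle := Finset.card_le_card hsub
          simp only [Finset.card_empty] at hle
          omega
    · -- Y nonempty
      have hYne : Y.Nonempty := Finset.nonempty_of_ne_empty hYe
      have hYcomp : UVCompatible u v Y := by
        refine ⟨hYne, fun B hB => ?_⟩
        rw [hYdef] at hB
        obtain ⟨hBne, hBim⟩ := Finset.mem_erase.1 hB
        obtain ⟨A, hA, rfl⟩ := Finset.mem_image.1 hBim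
        obtain ⟨huA, hvA, h3A⟩ := hXmem A hA
        refine ⟨Finset.mem_erase.2 ⟨fun h => hzu h.symm, huA⟩,
          Finset.mem_erase.2 ⟨fun h => hzv h.symm, hvA⟩, ?_⟩
        by_cases hzA : z ∈ A
        · have hc := Finset.card_erase_add_one hzA
          by_contra hlt
          have hA3 : A.card = 3 := by omega
          have hsub3 : ({z, u, v} : Finset V) ⊆ A := by
            intro x hx
            simp only [Finset.mem_insert, Finset.mem_singleton] at hx
            rcases hx with rfl | rfl | rfl <;> assumption
          have hAeq : ({z, u, v} : Finset V) = A :=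
            Finset.eq_of_subset_of_card_le hsub3 (by omega)
          apply hBne
          rw [← hAeq, Finset.erase_insert (by simp [hzu, hzv])]
        · rw [Finset.erase_eq_of_notMem hzA]
          exact h3A
      have hIY := hG2 Y hYcomp
      have hslack0 : ∀ A ∈ X, (0 : ℤ) ≤ (valU u v A - 2) - max (valU u v (A.erase z) - 2) 0 :=
        fun A hA => slack_nonneg u v z huv (hXmem A hA).2.2
      obtain ⟨N, hsubN, hNcard⟩ : ∃ N : Finset (Sym2 V),
          X.biUnion (covE (G ⊔ SimpleGraph.fromEdgeSet {s(z, a), s(z, b)})) ⊆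
            Y.biUnion (covE G) ∪ N ∧
          (N.card : ℤ) ≤ ∑ A ∈ X, ((valU u v A - 2) - max (valU u v (A.erase z) - 2) 0) := by
        by_cases hPa : ∃ A ∈ X, z ∈ A ∧ a ∈ A <;> by_cases hPb : ∃ A ∈ X, z ∈ A ∧ b ∈ A
        · refine ⟨{s(z, a), s(z, b)}, ?_, ?_⟩
          · intro e he
            rcases hmemG e he with h | ⟨rfl, _⟩ | ⟨rfl, _⟩
            · exact Finset.mem_union_left _ h
            · exact Finset.mem_union_right _ (by simp)
            · exact Finset.mem_union_right _ (by simp)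
          · have hle2 : ({s(z, a), s(z, b)} : Finset (Sym2 V)).card ≤ 2 :=
              (Finset.card_insert_le _ _).trans (by simp)
            have h2 : (2 : ℤ) ≤ ∑ A ∈ X, ((valU u v A - 2) - max (valU u v (A.erase z) - 2) 0) := by
              obtain ⟨Aa, hAa, hzAa, haAa⟩ := hPa
              obtain ⟨Ab, hAb, hzAb, hbAb⟩ := hPb
              by_cases heq : Aa = Ab
              · subst heq
                have h4 : 4 ≤ Aa.card := by
                  by_contra h4
                  obtain ⟨huA, hvA, h3A⟩ := hXmem Aa hAa
                  have hA3 : Aa.card = 3 := by omega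
                  have hsub3 : ({z, u, v} : Finset V) ⊆ Aa := by
                    intro x hx
                    simp only [Finset.mem_insert, Finset.mem_singleton] at hx
                    rcases hx with rfl | rfl | rfl <;> assumption
                  have hAeq : ({z, u, v} : Finset V) = Aa :=
                    Finset.eq_of_subset_of_card_le hsub3 (by omega)
                  rw [← hAeq] at haAa hbAb
                  simp only [Finset.mem_insert, Finset.mem_singleton] at haAa hbAb
                  apply habuv
                  constructor
                  · rcases haAa with h | h | h
                    · exact absurd h.symm hza
                    · exact Or.inl h
                    · exact Or.inr h
                  · rcases hbAb with h | h | h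
                    · exact absurd h.symm hzb
                    · exact Or.inl h
                    · exact Or.inr h
                exact le_trans (slack_ge_two u v z huv h4 hzAa)
                  (Finset.single_le_sum hslack0 hAa)
              · have hpair : ({Aa, Ab} : Finset (Finset V)) ⊆ X := by
                  intro x hx
                  rcases Finset.mem_insert.1 hx with rfl | hx
                  · exact hAa
                  · exact (Finset.mem_singleton.1 hx) ▸ hAb
                have hsum2 := Finset.sum_pair (f := fun A =>
                  ((valU u v A - 2) - max (valU u v (A.erase z) - 2) 0)) heq
                have h1a := slack_ge_one u v z huv (hXmem Aa hAa).2.2 hzAa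
                have h1b := slack_ge_one u v z huv (hXmem Ab hAb).2.2 hzAb
                calc (2 : ℤ) ≤ ∑ A ∈ ({Aa, Ab} : Finset (Finset V)),
                      ((valU u v A - 2) - max (valU u v (A.erase z) - 2) 0) := by
                      rw [hsum2]; linarith
                  _ ≤ _ := Finset.sum_le_sum_of_subset_of_nonneg hpair
                      (fun A hA _ => hslack0 A hA)
            calc ((({s(z, a), s(z, b)} : Finset (Sym2 V)).card : ℤ)) ≤ 2 := by exact_mod_cast hle2
              _ ≤ _ := h2
        · refine ⟨{s(z, a)}, ?_, ?_⟩
          · intro e he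
            rcases hmemG e he with h | ⟨rfl, _⟩ | ⟨rfl, hw⟩
            · exact Finset.mem_union_left _ h
            · exact Finset.mem_union_right _ (by simp)
            · exact absurd hw hPb
          · obtain ⟨Aa, hAa, hzAa, haAa⟩ := hPa
            have h1 := slack_ge_one u v z huv (hXmem Aa hAa).2.2 hzAa
            have hs := Finset.single_le_sum hslack0 hAa
            simp only [Finset.card_singleton]
            push_cast
            linarith
        · refine ⟨{s(z, b)}, ?_, ?_⟩
          · intro e he
            rcases hmemG e he with h | ⟨rfl, hw⟩ | ⟨rfl, _⟩
            · exact Finset.mem_union_left _ h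
            · exact absurd hw hPa
            · exact Finset.mem_union_right _ (by simp)
          · obtain ⟨Ab, hAb, hzAb, hbAb⟩ := hPb
            have h1 := slack_ge_one u v z huv (hXmem Ab hAb).2.2 hzAb
            have hs := Finset.single_le_sum hslack0 hAb
            simp only [Finset.card_singleton]
            push_cast
            linarith
        · refine ⟨∅, ?_, by simpa using Finset.sum_nonneg hslack0⟩
          intro e he
          rcases hmemG e he with h | ⟨rfl, hw⟩ | ⟨rfl, hw⟩
          · exact Finset.mem_union_left _ h
          · exact absurd hw hPa
          · exact absurd hw hPb
      have hcard1 : iFam (G ⊔ SimpleGraph.fromEdgeSet {s(z, a), s(z, b)}) X ≤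
          iFam G Y + N.card := by
        rw [iFam_eq, iFam_eq]
        exact (Finset.card_le_card hsubN).trans (Finset.card_union_le _ _)
      have hvalcomp : valFam u v Y + N.card ≤ valFam u v X := by
        rw [valFam_eq, valFam_eq]
        have h3a : ∀ B ∈ Y, valU u v B - 2 = max (valU u v B - 2) 0 := by
          intro B hB
          have h := valU_ge3 u v huv (hYcomp.2 B hB).2.2
          exact (max_eq_left (by linarith)).symm
        rw [Finset.sum_congr rfl h3a]
        have h3b : ∑ B ∈ Y, max (valU u v B - 2) 0 ≤
            ∑ B ∈ (X.image fun A => A.erase z), max (valU u v B - 2) 0 := by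
          rw [hYdef]
          exact Finset.sum_le_sum_of_subset_of_nonneg (Finset.erase_subset _ _)
            (fun B _ _ => le_max_right _ 0)
        have h3c := sum_image_le'' X (fun A => A.erase z)
          (fun B => max (valU u v B - 2) 0) (fun A _ => le_max_right _ 0)
        rw [Finset.sum_sub_distrib] at hNcard
        linarith
      have hc2 : (iFam (G ⊔ SimpleGraph.fromEdgeSet {s(z, a), s(z, b)}) X : ℤ) ≤
          (iFam G Y : ℤ) + N.card := by exact_mod_cast hcard1
      linarith
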